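/- Random forcing is σ-ρ̄-linked: let ⟨c_n⟩ be any sequence of positive reals with c_n → ∞ and define ρ_n(k) = m whenever (m−1)c_n < k ≤ m·c_n. Setting P_n = {A Borel ⊆ 2^ω : μ(A) ≥ 1/c_n}, the union ⋃_n P_n covers all positive-measure Borel sets, and for every k-element family {A_i : i < k} ⊆ P_n there is a subset a ⊆ k of size ρ_n(k) with μ(⋂_{i∈a} A_i) > 0. -/

import Mathlib

open MeasureTheory ENNReal

/-- Random forcing is σ-ρ̄-linked: with `P_n = {A : μ A ≥ 1/c_n}`, the pieces cover all
positive-measure Borel sets, and any `k` members of `P_n` contain `ρ_n(k) = m` many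
(where `(m−1)c_n < k ≤ m·c_n`) whose intersection has positive measure. -/
theorem stmt10 (μ : Measure (ℕ → Bool)) [IsProbabilityMeasure μ]
    (c : ℕ → ℝ) (hc : ∀ n, 0 < c n)
    (hctop : Filter.Tendsto c Filter.atTop Filter.atTop) :
    (∀ A : Set (ℕ → Bool), MeasurableSet A → 0 < μ A →
      ∃ n, ENNReal.ofReal (1 / c n) ≤ μ A) ∧
    (∀ n k m : ℕ, ((m : ℝ) - 1) * c n < k → (k : ℝ) ≤ m * c n →
      ∀ A : Fin k → Set (ℕ → Bool), (∀ i, MeasurableSet (A i)) →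
        (∀ i, ENNReal.ofReal (1 / c n) ≤ μ (A i)) →
        ∃ a : Finset (Fin k), a.card = m ∧ 0 < μ (⋂ i ∈ a, A i)) := by
  constructor
  · intro A hA hp
    have hfin : μ A ≠ ⊤ := measure_ne_top μ A
    have hpos : 0 < (μ A).toReal := ENNReal.toReal_pos hp.ne' hfin
    obtain ⟨n, hn⟩ := (hctop.eventually_ge_atTop (1 / (μ A).toReal)).exists
    refine ⟨n, ?_⟩
    have h1 : 1 / c n ≤ (μ A).toReal := (one_div_le (hc n) hpos).2 hn
    calc ENNReal.ofReal (1 / c n) ≤ ENNReal.ofReal (μ A).toReal :=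
          ENNReal.ofReal_le_ofReal h1
      _ = μ A := ENNReal.ofReal_toReal hfin
  · intro n k m hmk hkm A hA hAμ
    classical
    rcases Nat.eq_zero_or_pos m with rfl | hm
    · exact ⟨∅, rfl, by simp⟩
    set g : (ℕ → Bool) → ℕ := fun x => (Finset.univ.filter (fun i => x ∈ A i)).card with hg
    have hint : (k : ℝ≥0∞) * ENNReal.ofReal (1 / c n) ≤ ∫⁻ x, (g x : ℝ≥0∞) ∂μ := by
      have h1 : ∀ x, (g x : ℝ≥0∞) = ∑ i, (A i).indicator (fun _ => (1:ℝ≥0∞)) x := by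
        intro x
        simp [hg, Set.indicator_apply, Finset.sum_boole]
      calc (k : ℝ≥0∞) * ENNReal.ofReal (1 / c n)
          = ∑ _i : Fin k, ENNReal.ofReal (1 / c n) := by simp [mul_comm]
        _ ≤ ∑ i, μ (A i) := Finset.sum_le_sum fun i _ => hAμ i
        _ = ∑ i, ∫⁻ x, (A i).indicator (fun _ => (1:ℝ≥0∞)) x ∂μ := by
            refine Finset.sum_congr rfl fun i _ => ?_
            exact (lintegral_indicator_one (hA i)).symm
        _ = ∫⁻ x, ∑ i, (A i).indicator (fun _ => (1:ℝ≥0∞)) x ∂μ :=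
            (lintegral_finset_sum _ fun i _ => measurable_const.indicator (hA i)).symm
        _ = ∫⁻ x, (g x : ℝ≥0∞) ∂μ := by simp only [h1]
    have hS : 0 < μ {x | m ≤ g x} := by
      by_contra h
      have h0 : μ {x | m ≤ g x} = 0 := by
        exact le_antisymm (not_lt.1 h) zero_le
      have hae : ∀ᵐ x ∂μ, (g x : ℝ≥0∞) ≤ ((m - 1 : ℕ) : ℝ≥0∞) := by
        have : ∀ᵐ x ∂μ, g x < m := by
          rw [ae_iff]
          simpa [not_lt] using h0
        filter_upwards [this] with x hx
        exact_mod_cast Nat.le_sub_one_of_lt hx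
      have hle : ∫⁻ x, (g x : ℝ≥0∞) ∂μ ≤ ((m - 1 : ℕ) : ℝ≥0∞) := by
        calc ∫⁻ x, (g x : ℝ≥0∞) ∂μ ≤ ∫⁻ _x, ((m - 1 : ℕ) : ℝ≥0∞) ∂μ :=
              lintegral_mono_ae hae
          _ = ((m - 1 : ℕ) : ℝ≥0∞) := by simp
      have hlt : ((m - 1 : ℕ) : ℝ≥0∞) < (k : ℝ≥0∞) * ENNReal.ofReal (1 / c n) := by
        have hk : ((m : ℝ) - 1) < (k : ℝ) / c n := by
          rw [lt_div_iff₀ (hc n)]; exact hmk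
        have hcast : (((m - 1 : ℕ) : ℝ)) = (m : ℝ) - 1 := by
          push_cast [Nat.cast_sub hm]; ring
        calc ((m - 1 : ℕ) : ℝ≥0∞) = ENNReal.ofReal ((m : ℝ) - 1) := by
              rw [← hcast, ENNReal.ofReal_natCast]
          _ < ENNReal.ofReal ((k : ℝ) / c n) := by
              have h0 : (0:ℝ) ≤ (m : ℝ) - 1 := by
                have : (1:ℝ) ≤ m := by exact_mod_cast hm
                linarith
              exact (ENNReal.ofReal_lt_ofReal_iff (lt_of_le_of_lt h0 hk)).2 hk
          _ = (k : ℝ≥0∞) * ENNReal.ofReal (1 / c n) := by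
              rw [div_eq_mul_one_div, ENNReal.ofReal_mul (by positivity)]
              simp
      exact absurd (hint.trans hle) hlt.not_ge
    have hsub : {x | m ≤ g x} ⊆
        ⋃ a ∈ (Finset.univ.powersetCard m : Finset (Finset (Fin k))), ⋂ i ∈ a, A i := by
      intro x hx
      obtain ⟨a, ha, hcard⟩ := Finset.exists_subset_card_eq hx
      exact Set.mem_iUnion₂.2 ⟨a, Finset.mem_powersetCard.2 ⟨Finset.subset_univ _, hcard⟩,
        Set.mem_biInter fun i hi => (Finset.mem_filter.1 (ha hi)).2⟩
    by_contra hno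
    push_neg at hno
    have hzero : ∀ a ∈ (Finset.univ.powersetCard m : Finset (Finset (Fin k))),
        μ (⋂ i ∈ a, A i) = 0 := by
      intro a haa
      have := hno a (Finset.mem_powersetCard.1 haa).2
      exact le_antisymm this zero_le
    have : μ (⋃ a ∈ (Finset.univ.powersetCard m : Finset (Finset (Fin k))),
        ⋂ i ∈ a, A i) = 0 := by
      refine (measure_biUnion_null_iff (Finset.countable_toSet _)).2 ?_
      intro a ha
      exact hzero a ha
    exact absurd (hS.trans_le ((measure_mono hsub).trans this.le)) (lt_irrefl 0)
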